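/- Let (Ω, 𝔉, P) be a probability space and (Y_i)_{i≥1} independent ℝ^d-valued random vectors, each with distribution P_{θ*}. For each n, let θ̂_n : Ω → ℝ^d be measurable and satisfy, for P-almost every ω, ∑_{i=1}^n log L(Y_i(ω), θ̂_n(ω)) ≥ ∑_{i=1}^n log L(Y_i(ω), θ) for all θ ∈ ℝ^d (i.e., θ̂_n is a maximum likelihood estimator). Then ρ(θ̂_n, θ*) = min_{g∈G} ‖g θ̂_n − θ*‖ converges to 0 in P-probability: for every ε > 0, P( min_{g∈G} ‖g θ̂_n − θ*‖ > ε ) → 0 as n → ∞. -/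

import Mathlib

open MeasureTheory
open scoped BigOperators RealInnerProductSpace

noncomputable section

abbrev Euc (d : ℕ) := EuclideanSpace ℝ (Fin d)
abbrev Iso (d : ℕ) := Euc d ≃ₗᵢ[ℝ] Euc d

/-- The average `H̄ = (1/|H|) ∑_{h∈H} h` of a finite subgroup of linear isometries. -/
def groupAvg {d : ℕ} (H : Subgroup (Iso d)) [Fintype H] : Euc d →ₗ[ℝ] Euc d :=
  (Fintype.card H : ℝ)⁻¹ • ∑ h : H, ((h : Iso d).toLinearEquiv : Euc d →ₗ[ℝ] Euc d)

/-- The density `L(y,θ)` of the Gaussian mixture `P_θ = (1/|G|) ∑_{g∈G} N(gθ, I_d)`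
with respect to Lebesgue measure on `ℝ^d`. -/
def density {d : ℕ} (G : Subgroup (Iso d)) [Fintype G] (y θ : Euc d) : ℝ :=
  (1 / ((Fintype.card G : ℝ) * (2 * Real.pi) ^ ((d : ℝ) / 2))) *
    ∑ g : G, Real.exp (-‖y - (g : Iso d) θ‖ ^ 2 / 2)

/-- The population log-likelihood `Ψ(θ) = ∫ log L(y,θ) · L(y,θ*) dy`. -/
def popLogLik {d : ℕ} (G : Subgroup (Iso d)) [Fintype G] (θstar θ : Euc d) : ℝ :=
  ∫ y : Euc d, Real.log (density G y θ) * density G y θstar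

/-!
Wald's consistency argument, made quantitative by the Hellinger affinity `∫ √(h p)`.
If `h` dominates the likelihood `L(·, θ)` for every `θ` in a region, then on the event that
`θ̂ₙ` lies in that region the log-likelihood ratio `∑ᵢ log (h / L(·, θ*))(Yᵢ)` is nonnegative;
Markov's inequality for `∏ᵢ √(h / L(·, θ*))(Yᵢ)`, whose mean factorises by independence,
bounds the probability of that event by `(∫ √(h L(·, θ*)))ⁿ`.

The affinity of two different densities is `< 1`. Distinct orbits give different mixtures:
along the ray `y = t θ` the mixture is a sum of exponentials `e^{t ⟪θ, g θ'⟫}`, whose leading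
rate recovers `max_g ⟪θ, g θ'⟫`. By dominated convergence the affinity stays `< 1` for the
envelope of `L(·, θ)` over a small ball around any `θ₀` off the orbit of `θ*`, and for the
envelope over `‖θ‖ ≥ M` once `M` is large. Compactness of `{‖θ‖ ≤ M, ρ(θ, θ*) ≥ ε}` leaves
finitely many envelopes, so `P(ρ(θ̂ₙ, θ*) > ε) ≤ ∑ⱼ aⱼⁿ → 0` with all `aⱼ < 1`.
-/

open Real Filter Topology ProbabilityTheory
open scoped ENNReal

theorem IsCompact.exists_finset_forall_exists_of_forall_eventually {X β : Type*}
    [TopologicalSpace X] {K : Set X} (hK : IsCompact K) {P : β → Prop} {R : X → β → Prop}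
    (hloc : ∀ x ∈ K, ∃ b, P b ∧ ∀ᶠ z in 𝓝 x, R z b) :
    ∃ B : Finset β, (∀ b ∈ B, P b) ∧ ∀ x ∈ K, ∃ b ∈ B, R x b := by
  classical
  refine hK.induction_on
    (p := fun S => ∃ B : Finset β, (∀ b ∈ B, P b) ∧ ∀ x ∈ S, ∃ b ∈ B, R x b)
    ⟨∅, by simp, by simp⟩ ?_ ?_ fun x hx => ?_
  · rintro s t hst ⟨B, hB, hcover⟩
    exact ⟨B, hB, fun x hx => hcover x (hst hx)⟩
  · rintro s t ⟨B, hB, hs⟩ ⟨C, hC, ht⟩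
    refine ⟨B ∪ C, fun b hb => (Finset.mem_union.1 hb).elim (hB b) (hC b), ?_⟩
    rintro x (hx | hx)
    · obtain ⟨b, hb, hR⟩ := hs x hx
      exact ⟨b, Finset.mem_union_left _ hb, hR⟩
    · obtain ⟨b, hb, hR⟩ := ht x hx
      exact ⟨b, Finset.mem_union_right _ hb, hR⟩
  · obtain ⟨b, hb, hR⟩ := hloc x hx
    exact ⟨{z | R z b}, mem_nhdsWithin_of_mem_nhds hR, {b}, by simpa using hb,
      fun z hz => ⟨b, Finset.mem_singleton_self b, hz⟩⟩

theorem one_le_prod_sqrt_div_of_sum_log_le {ι : Type*} (s : Finset ι) {a b : ι → ℝ}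
    (ha : ∀ i, 0 < a i) (hb : ∀ i, 0 < b i) (h : ∑ i ∈ s, log (a i) ≤ ∑ i ∈ s, log (b i)) :
    1 ≤ ∏ i ∈ s, √(b i / a i) := by
  have hratio : ∀ i, 0 < √(b i / a i) := fun i => sqrt_pos.2 (div_pos (hb i) (ha i))
  rw [← log_nonneg_iff (Finset.prod_pos fun i _ => hratio i),
    log_prod fun i _ => (hratio i).ne']
  simp only [log_sqrt (div_pos (hb _) (ha _)).le, log_div (hb _).ne' (ha _).ne']
  rw [← Finset.sum_div, Finset.sum_sub_distrib]
  exact div_nonneg (sub_nonneg.2 h) zero_le_two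

theorem exists_le_of_forall_exp_le_mul_sum_exp {ι : Type*} (s : Finset ι) {a C : ℝ}
    {b : ι → ℝ} (h : ∀ t, 0 ≤ t → exp (t * a) ≤ C * ∑ i ∈ s, exp (t * b i)) :
    ∃ i ∈ s, a ≤ b i := by
  by_contra! hlt
  have hlim : Tendsto (fun t => C * ∑ i ∈ s, exp (t * (b i - a))) atTop (𝓝 0) := by
    simpa using (tendsto_finsetSum s fun i hi => tendsto_exp_atBot.comp
      (tendsto_id.atTop_mul_const_of_neg (sub_neg.2 (hlt i hi)))).const_mul C
  obtain ⟨t, ht1, ht0⟩ := ((hlim.eventually (gt_mem_nhds one_pos)).and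
    (eventually_ge_atTop 0)).exists
  have hfactor : ∑ i ∈ s, exp (t * b i) = exp (t * a) * ∑ i ∈ s, exp (t * (b i - a)) := by
    rw [Finset.mul_sum]
    refine Finset.sum_congr rfl fun i _ => ?_
    rw [← exp_add]
    ring_nf
  have := h t ht0
  rw [hfactor, mul_left_comm] at this
  linarith [mul_lt_of_lt_one_right (exp_pos (t * a)) ht1]

section Affinity

variable {E Ω : Type*} [MeasurableSpace E] [MeasurableSpace Ω]

def affinity (ν : Measure E) (p q : E → ℝ) : ℝ≥0∞ :=
  ∫⁻ y, ENNReal.ofReal (√(p y * q y)) ∂ν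

structure IsAffinityEnvelope (ν : Measure E) (p h : E → ℝ) : Prop where
  measurable : Measurable h
  pos : ∀ y, 0 < h y
  affinity_lt_one : affinity ν h p < 1

theorem measure_sum_log_le_le_affinity_pow {ν : Measure E} {P : Measure Ω} {p h : E → ℝ}
    (hp : Measurable p) (hp_pos : ∀ y, 0 < p y) (hh : Measurable h) (hh_pos : ∀ y, 0 < h y)
    {Y : ℕ → Ω → E} (hY : ∀ i, Measurable (Y i)) (hindep : iIndepFun Y P)
    (hlaw : ∀ i, P.map (Y i) = ν.withDensity (fun y => ENNReal.ofReal (p y))) (n : ℕ) :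
    P {ω | ∑ i ∈ Finset.range n, log (p (Y i ω)) ≤ ∑ i ∈ Finset.range n, log (h (Y i ω))}
      ≤ affinity ν h p ^ n := by
  set Q : E → ℝ≥0∞ := fun y => ENNReal.ofReal (√(h y / p y))
  have hQ : Measurable Q := (hh.div hp).sqrt.ennreal_ofReal
  have hsubset : {ω | ∑ i ∈ Finset.range n, log (p (Y i ω)) ≤
      ∑ i ∈ Finset.range n, log (h (Y i ω))} ⊆ {ω | 1 ≤ ∏ i ∈ Finset.range n, Q (Y i ω)} :=
    fun ω hω => by
      rw [Set.mem_ofPred_eq, ← ENNReal.ofReal_prod_of_nonneg fun i _ => sqrt_nonneg _]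
      exact ENNReal.one_le_ofReal.2
        (one_le_prod_sqrt_div_of_sum_log_le _ (fun i => hp_pos _) (fun i => hh_pos _) hω)
  have hfactor : ∀ i, ∫⁻ ω, Q (Y i ω) ∂P = affinity ν h p := by
    intro i
    rw [← lintegral_map hQ (hY i), hlaw i,
      lintegral_withDensity_eq_lintegral_mul _ hp.ennreal_ofReal hQ]
    refine lintegral_congr fun y => ?_
    have hpy := hp_pos y
    have hsqrt : p y * √(h y / p y) = √(h y * p y) := by
      rw [sqrt_div (hh_pos y).le, sqrt_mul (hh_pos y).le, mul_div_left_comm, div_sqrt]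
    rw [Pi.mul_apply, ← ENNReal.ofReal_mul hpy.le, hsqrt]
  calc _ ≤ P {ω | 1 ≤ ∏ i ∈ Finset.range n, Q (Y i ω)} := measure_mono hsubset
    _ ≤ ∫⁻ ω, ∏ i ∈ Finset.range n, Q (Y i ω) ∂P := by
      simpa using mul_meas_ge_le_lintegral₀
        (Finset.measurable_prod _ fun i _ => hQ.comp (hY i)).aemeasurable 1
    _ = ∏ i ∈ Finset.range n, ∫⁻ ω, Q (Y i ω) ∂P :=
      lintegral_prod_eq_prod_lintegral_of_indepFun _ (fun i => Q ∘ Y i)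
        (hindep.comp _ fun _ => hQ) fun i => hQ.comp (hY i)
    _ = affinity ν h p ^ n := by simp [hfactor]

theorem tendsto_measure_mle_mem_of_envelopes {Θ : Type*} {ν : Measure E} {P : Measure Ω}
    (f : E → Θ → ℝ) (hf_pos : ∀ y θ, 0 < f y θ) {θstar : Θ} (hf : Measurable (f · θstar))
    {Y : ℕ → Ω → E} (hY : ∀ i, Measurable (Y i)) (hindep : iIndepFun Y P)
    (hlaw : ∀ i, P.map (Y i) = ν.withDensity (fun y => ENNReal.ofReal (f y θstar)))
    {θhat : ℕ → Ω → Θ}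
    (hmle : ∀ n, ∀ᵐ ω ∂P, ∀ θ, ∑ i ∈ Finset.range n, log (f (Y i ω) θ) ≤
      ∑ i ∈ Finset.range n, log (f (Y i ω) (θhat n ω)))
    {S : Set Θ} {H : Finset (E → ℝ)} (hH : ∀ h ∈ H, IsAffinityEnvelope ν (f · θstar) h)
    (hS : ∀ θ ∈ S, ∃ h ∈ H, ∀ y, f y θ ≤ h y) :
    Tendsto (fun n => P {ω | θhat n ω ∈ S}) atTop (𝓝 0) := by
  have hbound : ∀ n, P {ω | θhat n ω ∈ S} ≤ ∑ h ∈ H, affinity ν h (f · θstar) ^ n := by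
    intro n
    calc P {ω | θhat n ω ∈ S}
        ≤ P (⋃ h ∈ H, {ω | ∑ i ∈ Finset.range n, log (f (Y i ω) θstar) ≤
            ∑ i ∈ Finset.range n, log (h (Y i ω))}) := by
          refine measure_mono_ae ?_
          filter_upwards [hmle n] with ω hω hmem
          obtain ⟨h, hH, hle⟩ := hS _ hmem
          exact Set.mem_iUnion₂.2 ⟨h, hH, (hω θstar).trans
            (Finset.sum_le_sum fun i _ => log_le_log (hf_pos _ _) (hle _))⟩
      _ ≤ _ := measure_biUnion_finset_le _ _
      _ ≤ _ := Finset.sum_le_sum fun h hh =>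
          measure_sum_log_le_le_affinity_pow hf (hf_pos · θstar) (hH h hh).measurable
            (hH h hh).pos hY hindep hlaw n
  have hlim : Tendsto (fun n => ∑ h ∈ H, affinity ν h (f · θstar) ^ n) atTop (𝓝 0) := by
    simpa using tendsto_finsetSum H fun h hh =>
      ENNReal.tendsto_pow_atTop_nhds_zero_of_lt_one (hH h hh).affinity_lt_one
  exact tendsto_of_tendsto_of_tendsto_of_le_of_le tendsto_const_nhds hlim (fun _ => zero_le)
    hbound

theorem affinity_lt_one {μ : Measure E} {p q : E → ℝ} (hp : 0 ≤ p) (hq : 0 ≤ q)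
    (hpi : Integrable p μ) (hqi : Integrable q μ) (hp1 : ∫ y, p y ∂μ = 1)
    (hq1 : ∫ y, q y ∂μ = 1) (hpq : ¬ p =ᵐ[μ] q) :
    affinity μ p q < 1 := by
  have hsq : ∀ y, (√(p y) - √(q y)) ^ 2 = p y + q y - 2 * √(p y * q y) := fun y => by
    rw [sub_sq, sq_sqrt (hp y), sq_sqrt (hq y), sqrt_mul (hp y)]
    ring
  have hint : Integrable (fun y => √(p y * q y)) μ := by
    refine (hpi.add hqi).mono'
      (continuous_sqrt.comp_aestronglyMeasurable (hpi.1.mul hqi.1)) (ae_of_all _ fun y => ?_)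
    rw [norm_of_nonneg (sqrt_nonneg _), Pi.add_apply]
    nlinarith [hsq y, sq_nonneg (√(p y) - √(q y)), sqrt_nonneg (p y * q y)]
  have hint_sq : Integrable (fun y => (√(p y) - √(q y)) ^ 2) μ := by
    simp_rw [hsq]
    exact (hpi.add hqi).sub (hint.const_mul 2)
  have hI : ∫ y, (√(p y) - √(q y)) ^ 2 ∂μ = 2 - 2 * ∫ y, √(p y * q y) ∂μ := by
    simp_rw [hsq]
    have hpqi : Integrable (fun y => p y + q y) μ := hpi.add hqi
    rw [integral_sub hpqi (hint.const_mul 2), integral_add hpi hqi, hp1, hq1,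
      integral_const_mul]
    ring
  have hpos : 0 < ∫ y, (√(p y) - √(q y)) ^ 2 ∂μ := by
    refine (integral_nonneg fun y => sq_nonneg _).lt_of_ne fun h0 => hpq ?_
    filter_upwards [(integral_eq_zero_iff_of_nonneg (fun y => sq_nonneg _) hint_sq).1 h0.symm]
      with y hy
    rw [← sq_sqrt (hp y), ← sq_sqrt (hq y), sub_eq_zero.1 (pow_eq_zero_iff two_ne_zero |>.1 hy)]
  rw [affinity, ← ofReal_integral_eq_lintegral_ofReal hint (ae_of_all _ fun y => sqrt_nonneg _),
    ENNReal.ofReal_lt_one]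
  linarith

theorem tendsto_affinity {μ : Measure E} {q : E → ℝ} (hq : Measurable q) (hq_nonneg : 0 ≤ q)
    (hq_int : Integrable (fun y => √(q y)) μ) {h : ℕ → E → ℝ} {hlim : E → ℝ} {B : ℝ}
    (hh : ∀ k, Measurable (h k)) (hB : ∀ k y, h k y ≤ B)
    (htendsto : ∀ y, Tendsto (fun k => h k y) atTop (𝓝 (hlim y))) :
    Tendsto (fun k => affinity μ (h k) q) atTop (𝓝 (affinity μ hlim q)) := by
  refine tendsto_lintegral_of_dominated_convergence (fun y => ENNReal.ofReal (√B * √(q y)))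
    (fun k => ((hh k).mul hq).sqrt.ennreal_ofReal) (fun k => ae_of_all _ fun y => ?_)
    (hq_int.const_mul _).lintegral_lt_top.ne (ae_of_all _ fun y => ?_)
  · dsimp only
    rw [← sqrt_mul' _ (hq_nonneg y)]
    exact ENNReal.ofReal_le_ofReal
      (sqrt_le_sqrt (mul_le_mul_of_nonneg_right (hB k y) (hq_nonneg y)))
  · exact ((ENNReal.continuous_ofReal.comp continuous_sqrt).tendsto _).comp
      ((htendsto y).mul_const _)

end Affinity

section Gaussian

variable {V : Type*} [NormedAddCommGroup V] [InnerProductSpace ℝ V] [FiniteDimensional ℝ V]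
  [MeasurableSpace V] [BorelSpace V]

theorem integrable_exp_neg_norm_sub_sq_div {b : ℝ} (hb : 0 < b) (c : V) :
    Integrable (fun y : V => exp (-‖y - c‖ ^ 2 / b)) := by
  have hint : Integrable (fun y : V => exp (-b⁻¹ * ‖y‖ ^ 2)) :=
    .of_integral_ne_zero <| by
      rw [GaussianFourier.integral_rexp_neg_mul_sq_norm (inv_pos.2 hb)]
      positivity
  simpa [neg_div, div_eq_inv_mul] using hint.comp_sub_right c

theorem integral_exp_neg_norm_sub_sq_div_two (c : V) :
    ∫ y : V, exp (-‖y - c‖ ^ 2 / 2) = (2 * π) ^ ((Module.finrank ℝ V : ℝ) / 2) := by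
  simp_rw [neg_div, div_eq_inv_mul _ (2 : ℝ), ← neg_mul]
  rw [integral_sub_right_eq_self (fun y : V => exp (-2⁻¹ * ‖y‖ ^ 2)) c,
    GaussianFourier.integral_rexp_neg_mul_sq_norm (by norm_num)]
  congr 1 <;> ring

end Gaussian

section GaussianMixture

variable {d : ℕ} (G : Subgroup (Iso d)) [Fintype G]

/-- The mixture density with the distances `‖y - g θ‖` replaced by arbitrary `r g y`; the
envelopes of the likelihood are of this form. -/
def gaussianSum (r : G → Euc d → ℝ) (y : Euc d) : ℝ :=
  (1 / ((Fintype.card G : ℝ) * (2 * π) ^ ((d : ℝ) / 2))) * ∑ g : G, exp (-r g y ^ 2 / 2)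

theorem density_eq_gaussianSum (y θ : Euc d) :
    density G y θ = gaussianSum G (fun g y => ‖y - (g : Iso d) θ‖) y := rfl

theorem gaussianSum_const_pos : 0 < 1 / ((Fintype.card G : ℝ) * (2 * π) ^ ((d : ℝ) / 2)) := by
  have : (0 : ℝ) < Fintype.card G := Nat.cast_pos.2 Fintype.card_pos
  positivity

theorem gaussianSum_pos (r : G → Euc d → ℝ) (y : Euc d) : 0 < gaussianSum G r y :=
  mul_pos (gaussianSum_const_pos G) (Finset.sum_pos (fun _ _ => exp_pos _) Finset.univ_nonempty)

theorem gaussianSum_le (r : G → Euc d → ℝ) (y : Euc d) :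
    gaussianSum G r y ≤ ((2 * π) ^ ((d : ℝ) / 2))⁻¹ := by
  have hcard : (0 : ℝ) < Fintype.card G := Nat.cast_pos.2 Fintype.card_pos
  calc gaussianSum G r y
      ≤ 1 / ((Fintype.card G : ℝ) * (2 * π) ^ ((d : ℝ) / 2)) * ∑ _g : G, (1 : ℝ) := by
        refine mul_le_mul_of_nonneg_left (Finset.sum_le_sum fun g _ => ?_)
          (gaussianSum_const_pos G).le
        rw [exp_le_one_iff]
        nlinarith [sq_nonneg (r g y)]
    _ = ((2 * π) ^ ((d : ℝ) / 2))⁻¹ := by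
        rw [Finset.sum_const, Finset.card_univ, nsmul_one]
        field_simp

theorem gaussianSum_le_gaussianSum {r r' : G → Euc d → ℝ} {y : Euc d} (hr' : ∀ g, 0 ≤ r' g y)
    (hle : ∀ g, r' g y ≤ r g y) : gaussianSum G r y ≤ gaussianSum G r' y := by
  unfold gaussianSum
  gcongr with g
  exacts [hr' g, hle g]

theorem continuous_gaussianSum {r : G → Euc d → ℝ} (hr : ∀ g, Continuous (r g)) :
    Continuous (gaussianSum G r) := by
  unfold gaussianSum
  fun_prop

theorem tendsto_gaussianSum {ι : Type*} {l : Filter ι} {r : ι → G → Euc d → ℝ}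
    {r₀ : G → Euc d → ℝ} {y : Euc d} (hr : ∀ g, Tendsto (fun k => r k g y) l (𝓝 (r₀ g y))) :
    Tendsto (fun k => gaussianSum G (r k) y) l (𝓝 (gaussianSum G r₀ y)) :=
  (tendsto_finsetSum _ fun g _ =>
    ((continuous_exp.tendsto _).comp (((hr g).pow 2).neg.div_const 2))).const_mul _

theorem density_pos (y θ : Euc d) : 0 < density G y θ := by
  rw [density_eq_gaussianSum]
  exact gaussianSum_pos G _ y

theorem continuous_density (θ : Euc d) : Continuous (density G · θ) :=
  continuous_gaussianSum G fun _ => by fun_prop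

theorem integrable_density (θ : Euc d) : Integrable (density G · θ) := by
  unfold density
  exact (integrable_finsetSum Finset.univ fun (g : G) _ =>
    integrable_exp_neg_norm_sub_sq_div two_pos ((g : Iso d) θ)).const_mul _

theorem integral_density (θ : Euc d) : ∫ y, density G y θ = 1 := by
  have hcard : (0 : ℝ) < Fintype.card G := Nat.cast_pos.2 Fintype.card_pos
  simp only [density_eq_gaussianSum, gaussianSum]
  rw [integral_const_mul, integral_finsetSum]
  · simp only [integral_exp_neg_norm_sub_sq_div_two, finrank_euclideanSpace_fin,
      Finset.sum_const, Finset.card_univ, nsmul_eq_mul]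
    field_simp
  exact fun g _ => integrable_exp_neg_norm_sub_sq_div two_pos _

theorem integrable_sqrt_density (θ : Euc d) : Integrable (fun y => √(density G y θ)) := by
  have hbound : Integrable (fun y => √(1 / ((Fintype.card G : ℝ) * (2 * π) ^ ((d : ℝ) / 2))) *
      ∑ g : G, exp (-‖y - (g : Iso d) θ‖ ^ 2 / 4)) :=
    (integrable_finsetSum Finset.univ fun (g : G) _ =>
      integrable_exp_neg_norm_sub_sq_div four_pos ((g : Iso d) θ)).const_mul _
  refine hbound.mono' (continuous_sqrt.comp (continuous_density G θ)).aestronglyMeasurable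
    (ae_of_all _ fun y => ?_)
  rw [norm_of_nonneg (sqrt_nonneg _), density_eq_gaussianSum, gaussianSum,
    sqrt_mul (gaussianSum_const_pos G).le]
  gcongr
  rw [sqrt_le_left (Finset.sum_nonneg fun _ _ => (exp_pos _).le)]
  refine le_of_eq_of_le (Finset.sum_congr rfl fun g _ => ?_)
    (Finset.sum_sq_le_sq_sum_of_nonneg fun _ _ => (exp_pos _).le)
  rw [← exp_nat_mul]
  ring_nf

theorem sum_exp_neg_norm_smul_sub_sq (ξ φ : Euc d) (t : ℝ) :
    ∑ g : G, exp (-‖t • ξ - (g : Iso d) φ‖ ^ 2 / 2) =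
      exp (-(‖t • ξ‖ ^ 2 + ‖φ‖ ^ 2) / 2) * ∑ g : G, exp (t * ⟪ξ, (g : Iso d) φ⟫) := by
  rw [Finset.mul_sum]
  refine Finset.sum_congr rfl fun g _ => ?_
  rw [← exp_add, norm_sub_sq_real, real_inner_smul_left, LinearIsometryEquiv.norm_map]
  ring_nf

theorem exists_norm_sq_le_inner_of_density_eq {θ θ' : Euc d}
    (h : ∀ y, density G y θ = density G y θ') : ∃ g : G, ‖θ‖ ^ 2 ≤ ⟪θ, (g : Iso d) θ'⟫ := by
  suffices hexp : ∀ t : ℝ, 0 ≤ t → exp (t * ‖θ‖ ^ 2) ≤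
      exp ((‖θ‖ ^ 2 - ‖θ'‖ ^ 2) / 2) * ∑ g : G, exp (t * ⟪θ, (g : Iso d) θ'⟫) by
    obtain ⟨g, -, hg⟩ := exists_le_of_forall_exp_le_mul_sum_exp Finset.univ hexp
    exact ⟨g, hg⟩
  intro t _
  have hsum := mul_left_cancel₀ (gaussianSum_const_pos G).ne' (h (t • θ))
  rw [sum_exp_neg_norm_smul_sub_sq, sum_exp_neg_norm_smul_sub_sq] at hsum
  calc exp (t * ‖θ‖ ^ 2) = exp (t * ⟪θ, ((1 : G) : Iso d) θ⟫) := by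
        simp
    _ ≤ ∑ g : G, exp (t * ⟪θ, (g : Iso d) θ⟫) :=
        Finset.single_le_sum (f := fun g : G => exp (t * ⟪θ, (g : Iso d) θ⟫))
          (fun g _ => (exp_pos _).le) (Finset.mem_univ 1)
    _ = exp ((‖θ‖ ^ 2 - ‖θ'‖ ^ 2) / 2) * ∑ g : G, exp (t * ⟪θ, (g : Iso d) θ'⟫) := by
        refine mul_left_cancel₀ (exp_pos (-(‖t • θ‖ ^ 2 + ‖θ‖ ^ 2) / 2)).ne' ?_
        rw [hsum, ← mul_assoc, ← exp_add]
        ring_nf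

theorem exists_map_eq_of_density_eq {θ θ' : Euc d} (h : ∀ y, density G y θ = density G y θ') :
    ∃ g : G, (g : Iso d) θ = θ' := by
  obtain ⟨g, hg⟩ := exists_norm_sq_le_inner_of_density_eq G fun y => (h y).symm
  obtain ⟨g', hg'⟩ := exists_norm_sq_le_inner_of_density_eq G h
  refine ⟨g, ?_⟩
  have hcs : ⟪θ', (g : Iso d) θ⟫ ≤ ‖θ'‖ * ‖θ‖ :=
    (real_inner_le_norm _ _).trans_eq (by rw [LinearIsometryEquiv.norm_map])
  have hcs' : ⟪θ, (g' : Iso d) θ'⟫ ≤ ‖θ‖ * ‖θ'‖ :=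
    (real_inner_le_norm _ _).trans_eq (by rw [LinearIsometryEquiv.norm_map])
  have hdist : ‖(g : Iso d) θ - θ'‖ ^ 2 ≤ 0 := by
    rw [norm_sub_sq_real, LinearIsometryEquiv.norm_map, real_inner_comm]
    nlinarith [sq_nonneg (‖θ‖ - ‖θ'‖)]
  exact sub_eq_zero.1 (norm_eq_zero.1 (pow_eq_zero_iff two_ne_zero |>.1
    (le_antisymm hdist (sq_nonneg _))))

def ballEnvelope (θ₀ : Euc d) (δ : ℝ) : Euc d → ℝ :=
  gaussianSum G fun g y => max (‖y - (g : Iso d) θ₀‖ - δ) 0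

def farEnvelope (M : ℝ) : Euc d → ℝ :=
  gaussianSum G fun _ y => max (M - ‖y‖) 0

theorem density_le_ballEnvelope {θ θ₀ : Euc d} {δ : ℝ} (hθ : dist θ θ₀ ≤ δ) (y : Euc d) :
    density G y θ ≤ ballEnvelope G θ₀ δ y := by
  rw [density_eq_gaussianSum, ballEnvelope]
  refine gaussianSum_le_gaussianSum G (fun g => le_max_right _ _) fun g =>
    max_le ?_ (norm_nonneg _)
  have hmove : ‖(g : Iso d) θ - (g : Iso d) θ₀‖ = dist θ θ₀ := by
    rw [← dist_eq_norm, LinearIsometryEquiv.dist_map]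
  linarith [norm_sub_le_norm_sub_add_norm_sub y ((g : Iso d) θ) ((g : Iso d) θ₀)]

theorem density_le_farEnvelope {θ : Euc d} {M : ℝ} (hθ : M ≤ ‖θ‖) (y : Euc d) :
    density G y θ ≤ farEnvelope G M y := by
  rw [density_eq_gaussianSum, farEnvelope]
  refine gaussianSum_le_gaussianSum G (fun g => le_max_right _ _) fun g =>
    max_le ?_ (norm_nonneg _)
  have := norm_sub_norm_le ((g : Iso d) θ) y
  rw [LinearIsometryEquiv.norm_map, norm_sub_rev] at this
  linarith

theorem continuous_farEnvelope (M : ℝ) : Continuous (farEnvelope G M) :=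
  continuous_gaussianSum G fun _ => by fun_prop

theorem continuous_ballEnvelope (θ₀ : Euc d) (δ : ℝ) : Continuous (ballEnvelope G θ₀ δ) :=
  continuous_gaussianSum G fun _ => by fun_prop

variable (θstar : Euc d)

theorem exists_isAffinityEnvelope_farEnvelope :
    ∃ M, IsAffinityEnvelope volume (density G · θstar) (farEnvelope G M) := by
  have hlim : Tendsto (fun k : ℕ => affinity volume (farEnvelope G k) (density G · θstar))
      atTop (𝓝 (affinity volume 0 (density G · θstar))) := by
    refine tendsto_affinity (continuous_density G θstar).measurable
      (fun y => (density_pos G y θstar).le) (integrable_sqrt_density G θstar)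
      (fun k => (continuous_farEnvelope G k).measurable)
      (fun _ => gaussianSum_le G _) fun y => ?_
    have hr : Tendsto (fun k : ℕ => max ((k : ℝ) - ‖y‖) 0) atTop atTop :=
      tendsto_atTop_mono (fun k => le_max_left _ _)
        (tendsto_atTop_add_const_right _ _ tendsto_natCast_atTop_atTop)
    have hexp : Tendsto (fun k : ℕ => exp (-max ((k : ℝ) - ‖y‖) 0 ^ 2 / 2)) atTop (𝓝 0) :=
      tendsto_exp_atBot.comp ((tendsto_neg_atTop_atBot.comp
        ((tendsto_pow_atTop two_ne_zero).comp hr)).atBot_div_const two_pos)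
    simpa [farEnvelope, gaussianSum] using
      (tendsto_finsetSum (Finset.univ : Finset G) fun _ _ => hexp).const_mul
        (1 / ((Fintype.card G : ℝ) * (2 * π) ^ ((d : ℝ) / 2)))
  have hzero : affinity volume 0 (density G · θstar) = 0 := by simp [affinity]
  obtain ⟨M, hM⟩ := (hlim.eventually (gt_mem_nhds (hzero ▸ zero_lt_one))).exists
  exact ⟨M, (continuous_farEnvelope G M).measurable, gaussianSum_pos G _, hM⟩

theorem exists_isAffinityEnvelope_ballEnvelope {θ₀ : Euc d}
    (hθ₀ : ∀ g : G, (g : Iso d) θ₀ ≠ θstar) :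
    ∃ δ > 0, IsAffinityEnvelope volume (density G · θstar) (ballEnvelope G θ₀ δ) := by
  have hlim : Tendsto (fun k : ℕ => affinity volume (ballEnvelope G θ₀ (1 / (k + 1)))
      (density G · θstar)) atTop (𝓝 (affinity volume (density G · θ₀) (density G · θstar))) := by
    refine tendsto_affinity (continuous_density G θstar).measurable
      (fun y => (density_pos G y θstar).le) (integrable_sqrt_density G θstar)
      (fun k => (continuous_ballEnvelope G θ₀ _).measurable)
      (fun _ => gaussianSum_le G _) fun y => ?_
    rw [density_eq_gaussianSum]
    refine tendsto_gaussianSum G fun g => ?_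
    simpa using (tendsto_const_nhds (x := ‖y - (g : Iso d) θ₀‖)).sub
      tendsto_one_div_add_atTop_nhds_zero_nat |>.max (tendsto_const_nhds (x := (0 : ℝ)))
  have haff : affinity volume (density G · θ₀) (density G · θstar) < 1 := by
    refine affinity_lt_one (fun y => (density_pos G y θ₀).le) (fun y => (density_pos G y θstar).le)
      (integrable_density G θ₀) (integrable_density G θstar) (integral_density G θ₀)
      (integral_density G θstar) fun hae => ?_
    have heq := ((continuous_density G θ₀).ae_eq_iff_eq volume (continuous_density G θstar)).1 hae
    obtain ⟨g, hg⟩ := exists_map_eq_of_density_eq G fun y => congrFun heq y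
    exact hθ₀ g hg
  obtain ⟨k, hk⟩ := (hlim.eventually (gt_mem_nhds haff)).exists
  exact ⟨1 / (k + 1), by positivity, (continuous_ballEnvelope G θ₀ _).measurable,
    gaussianSum_pos G _, hk⟩

theorem exists_isAffinityEnvelope_cover {C : Set (Euc d)} (hC : IsClosed C)
    (hCθstar : ∀ θ ∈ C, ∀ g : G, (g : Iso d) θ ≠ θstar) :
    ∃ H : Finset (Euc d → ℝ), (∀ h ∈ H, IsAffinityEnvelope volume (density G · θstar) h) ∧
      ∀ θ ∈ C, ∃ h ∈ H, ∀ y, density G y θ ≤ h y := by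
  classical
  obtain ⟨M, hM⟩ := exists_isAffinityEnvelope_farEnvelope G θstar
  obtain ⟨H, hH, hcover⟩ := ((isCompact_closedBall 0 M).inter_right hC)
    |>.exists_finset_forall_exists_of_forall_eventually
      (R := fun θ (h : Euc d → ℝ) => ∀ y, density G y θ ≤ h y) fun θ₀ hθ₀ => by
      obtain ⟨δ, hδ, henv⟩ := exists_isAffinityEnvelope_ballEnvelope G θstar (hCθstar θ₀ hθ₀.2)
      exact ⟨_, henv, Filter.mem_of_superset (Metric.closedBall_mem_nhds θ₀ hδ)
        fun θ hθ => density_le_ballEnvelope G hθ⟩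
  refine ⟨insert (farEnvelope G M) H, Finset.forall_mem_insert _ _ _ |>.2 ⟨hM, hH⟩,
    fun θ hθ => ?_⟩
  by_cases hθM : ‖θ‖ ≤ M
  · obtain ⟨h, hh, hle⟩ := hcover θ ⟨mem_closedBall_zero_iff.2 hθM, hθ⟩
    exact ⟨h, Finset.mem_insert_of_mem hh, hle⟩
  · exact ⟨_, Finset.mem_insert_self _ _, density_le_farEnvelope G (not_le.1 hθM).le⟩

end GaussianMixture

theorem mle_consistency_general {d : ℕ} (G : Subgroup (Iso d)) [Fintype G] (θstar : Euc d)
    {Ω : Type*} [MeasurableSpace Ω] (P : Measure Ω)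
    (Y : ℕ → Ω → Euc d) (hYmeas : ∀ i, Measurable (Y i))
    (hindep : ProbabilityTheory.iIndepFun Y P)
    (hlaw : ∀ i, P.map (Y i) =
      (volume : Measure (Euc d)).withDensity (fun y => ENNReal.ofReal (density G y θstar)))
    (θhat : ℕ → Ω → Euc d)
    (hmle : ∀ n : ℕ, ∀ᵐ ω ∂P, ∀ θ : Euc d,
      ∑ i ∈ Finset.range n, Real.log (density G (Y i ω) θ) ≤
        ∑ i ∈ Finset.range n, Real.log (density G (Y i ω) (θhat n ω)))
    (ε : ℝ) (hε : 0 < ε) :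
    Filter.Tendsto
      (fun n : ℕ => P {ω | ε < ⨅ g : G, ‖(g : Iso d) (θhat n ω) - θstar‖})
      Filter.atTop (nhds 0) := by
  have hC : IsClosed {θ : Euc d | ∀ g : G, ε ≤ ‖(g : Iso d) θ - θstar‖} := by
    simp only [Set.ofPred_forall]
    exact isClosed_iInter fun g => isClosed_le continuous_const (by fun_prop)
  obtain ⟨H, hH, hcover⟩ := exists_isAffinityEnvelope_cover G θstar hC fun θ hθ g hg => by
    simpa [hg] using (hθ g).trans_lt' hε
  refine tendsto_measure_mle_mem_of_envelopes (density G) (density_pos G)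
    (continuous_density G θstar).measurable hYmeas hindep hlaw hmle
    (S := {θ | ε < ⨅ g : G, ‖(g : Iso d) θ - θstar‖}) hH fun θ hθ => hcover θ fun g => ?_
  exact hθ.le.trans (ciInf_le ⟨0, by rintro _ ⟨g, rfl⟩; positivity⟩ g)

/-- Consistency of the MLE. If `Y_1, Y_2, …` are i.i.d. with
distribution `P_{θ*}` (density `L(·,θ*)` w.r.t. Lebesgue measure) and `θ̂_n` is a
maximum likelihood estimator built from `Y_1, …, Y_n`, then
`ρ(θ̂_n, θ*) = min_{g∈G} ‖g θ̂_n - θ*‖ → 0` in probability. -/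
theorem mle_consistency {d : ℕ} (G : Subgroup (Iso d)) [Fintype G] (θstar : Euc d)
    {Ω : Type*} [MeasurableSpace Ω] (P : Measure Ω) [IsProbabilityMeasure P]
    (Y : ℕ → Ω → Euc d) (hYmeas : ∀ i, Measurable (Y i))
    (hindep : ProbabilityTheory.iIndepFun Y P)
    (hlaw : ∀ i, P.map (Y i) =
      (volume : Measure (Euc d)).withDensity (fun y => ENNReal.ofReal (density G y θstar)))
    (θhat : ℕ → Ω → Euc d) (hθmeas : ∀ n, Measurable (θhat n))
    (hmle : ∀ n : ℕ, ∀ᵐ ω ∂P, ∀ θ : Euc d,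
      ∑ i ∈ Finset.range n, Real.log (density G (Y i ω) θ) ≤
        ∑ i ∈ Finset.range n, Real.log (density G (Y i ω) (θhat n ω)))
    (ε : ℝ) (hε : 0 < ε) :
    Filter.Tendsto
      (fun n : ℕ => P {ω | ε < ⨅ g : G, ‖(g : Iso d) (θhat n ω) - θstar‖})
      Filter.atTop (nhds 0) :=
  mle_consistency_general G θstar P Y hYmeas hindep hlaw θhat hmle ε hε
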